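/- Let G be a finitely generated group admitting a finite symmetric generating system S_0 such that: (1) there are no s₁, s₂, s₃ ∈ S_0 with s₁s₂ = s₃; (2) there are no s₁, s₂ ∈ S_0 with s₁ ≠ s₂ and s₁ ≠ s₂⁻¹ and s₁²s₂² = e; (3) there are no s₁, s₂ ∈ S_0 with s₁ ≠ s₂ and s₁ ≠ s₂⁻¹ and s₂⁻¹s₁s₂ = s₁⁻¹; (4) there are no s₁, s₂ ∈ S_0 with s₁ ≠ s₂ and s₁ ≠ s₂⁻¹ and s₂⁻¹s₁s₂ = s₁; (5) S_0 contains at least two distinct elements that are not inverses of each other. Then every bijection φ: G → G that is an isometry of (G, d_S) for every finite symmetric generating system S of G is a left translation x ↦ c·x for some c ∈ G; consequently the group of all such shared isometries is isomorphic to G. -/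

import Mathlib

/-! Common definitions: word metrics, quasi-isometries, rough isometries. -/

/-- `g` is a product of `n` elements of `S ∪ S⁻¹`. -/
def IsWordProd {G : Type*} [Group G] (S : Set G) (g : G) (n : ℕ) : Prop :=
  ∃ l : List G, l.length = n ∧ (∀ s ∈ l, s ∈ S ∪ S⁻¹) ∧ l.prod = g

/-- The word metric associated to a generating system `S`: the least `n` such that
`x⁻¹ * y` is a product of `n` elements of `S ∪ S⁻¹`. -/
noncomputable def wdist {G : Type*} [Group G] (S : Set G) (x y : G) : ℕ :=
  sInf {n | IsWordProd S (x⁻¹ * y) n}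

/-- The word norm `‖g‖_S = d_S(e, g)`. -/
noncomputable def wnorm {G : Type*} [Group G] (S : Set G) (g : G) : ℕ :=
  wdist S 1 g

/-- `(η, η')` is a `(lam, eps)`-quasi-isometry between `(X, dX)` and `(Y, dY)`. -/
def IsQIPair {X Y : Type*} (dX : X → X → ℝ) (dY : Y → Y → ℝ)
    (η : X → Y) (η' : Y → X) (lam eps : ℝ) : Prop :=
  (∀ x x' : X, lam⁻¹ * dX x x' - eps ≤ dY (η x) (η x') ∧
      dY (η x) (η x') ≤ lam * dX x x' + eps) ∧
  (∀ y y' : Y, lam⁻¹ * dY y y' - eps ≤ dX (η' y) (η' y') ∧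
      dX (η' y) (η' y') ≤ lam * dY y y' + eps) ∧
  (∀ y : Y, dY (η (η' y)) y ≤ eps) ∧
  (∀ x : X, dX (η' (η x)) x ≤ eps)

/-- `(η, η')` is an `eps`-isometry between `(X, dX)` and `(Y, dY)`. -/
def IsEpsIsomPair {X Y : Type*} (dX : X → X → ℝ) (dY : Y → Y → ℝ)
    (η : X → Y) (η' : Y → X) (eps : ℝ) : Prop :=
  (∀ x x' : X, |dX x x' - dY (η x) (η x')| ≤ eps) ∧
  (∀ y y' : Y, |dY y y' - dX (η' y) (η' y')| ≤ eps) ∧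
  (∀ y : Y, dY (η (η' y)) y ≤ eps) ∧
  (∀ x : X, dX (η' (η x)) x ≤ eps)

/-- The real-valued word metric. -/
noncomputable def wdistR {G : Type*} [Group G] (S : Set G) (x y : G) : ℝ :=
  (wdist S x y : ℝ)

/-- The group (under composition) of bijections of `G` preserving the distance `d S`
for every generating system `S` in the family `𝒮`, as a subgroup of `Equiv.Perm G`. -/
def sharedIsomGroup {G : Type*} [Group G] (𝒮 : Set (Set G))
    (d : Set G → G → G → ℕ) : Subgroup (Equiv.Perm G) where
  carrier := {φ : Equiv.Perm G | ∀ S ∈ 𝒮, ∀ x y : G, d S (φ x) (φ y) = d S x y}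
  one_mem' := fun S _ x y => rfl
  mul_mem' := by
    intro a b ha hb S hS x y
    rw [Equiv.Perm.mul_apply, Equiv.Perm.mul_apply, ha S hS, hb S hS]
  inv_mem' := by
    intro a ha S hS x y
    have h := ha S hS (a⁻¹ x) (a⁻¹ y)
    have e : ∀ z : G, a (a⁻¹ z) = z := fun z => a.apply_symm_apply z
    rw [e, e] at h
    exact h.symm

/-- The family of all finite symmetric generating systems of `G`. -/
def symGenFamily (G : Type*) [Group G] : Set (Set G) :=
  {S : Set G | S.Finite ∧ S⁻¹ = S ∧ Subgroup.closure S = ⊤}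

/-! For a symmetric generating set `S` with `1 ∉ S`, `S` is the unit sphere of `d_S` about `1`, so
a shared isometry `χ` fixing `1` preserves every such `S`, hence every difference `A \ B`. Taking
`x ∈ A \ B ⊆ {x, x⁻¹}` (add `x^{±1}` to `S₀`, or, for `x ∈ S₀`, trade `x^{±1}` for `(x t)^{±1}`,
which triangle-freeness keeps away from `x`) gives `χ x ∈ {x, x⁻¹}`; applied to the translates
`w ↦ (χ a)⁻¹ χ (a w)` this says `χ (a x) ∈ {χ a * x, χ a * x⁻¹}`. For two generators `a`, `b`
that are not mutually inverse, each alternative to `χ a = a`, `χ b = b`, `χ (a b) = a b` yields one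
of the forbidden relations, and if `χ x = x⁻¹ ≠ x` then conjugation by `x` inverts `a`, `b` and
`a b`, forcing `a b = b a`. -/

section

variable {G : Type*} [Group G]

lemma isWordProd_zero_iff {S : Set G} {g : G} : IsWordProd S g 0 ↔ g = 1 := by
  simp [IsWordProd, eq_comm]

lemma isWordProd_one_iff {S : Set G} {g : G} : IsWordProd S g 1 ↔ g ∈ S ∪ S⁻¹ := by
  simp [IsWordProd, List.length_eq_one_iff]

lemma Nat.sInf_eq_one_iff {s : Set ℕ} : sInf s = 1 ↔ 1 ∈ s ∧ 0 ∉ s := by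
  constructor
  · intro h
    have hs : s.Nonempty := Set.nonempty_iff_ne_empty.2 fun he => by simp [he] at h
    exact ⟨h ▸ Nat.sInf_mem hs, fun h0 => by simp [Nat.sInf_eq_zero.2 (Or.inl h0)] at h⟩
  · rintro ⟨h1, h0⟩
    have hle := Nat.sInf_le h1
    have hne : sInf s ≠ 0 := by simp [Nat.sInf_eq_zero, h0, Set.nonempty_iff_ne_empty.1 ⟨1, h1⟩]
    omega

lemma wdist_eq_one_iff {S : Set G} {x y : G} :
    wdist S x y = 1 ↔ x⁻¹ * y ∈ S ∪ S⁻¹ ∧ x⁻¹ * y ≠ 1 := by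
  rw [wdist, Nat.sInf_eq_one_iff]
  simp only [Set.mem_ofPred_eq, isWordProd_zero_iff, isWordProd_one_iff]

lemma wdist_mul_left (S : Set G) (c x y : G) : wdist S (c * x) (c * y) = wdist S x y := by
  rw [wdist, wdist, mul_inv_rev, mul_assoc, inv_mul_cancel_left]

lemma wdist_one_eq_one_iff {S : Set G} (hS : S⁻¹ = S) (h1 : (1 : G) ∉ S) {g : G} :
    wdist S 1 g = 1 ↔ g ∈ S := by
  rw [wdist_eq_one_iff, inv_one, one_mul, hS, Set.union_self]
  exact ⟨And.left, fun hg => ⟨hg, fun h => h1 (h ▸ hg)⟩⟩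

def IsSharedIsometry (χ : G → G) : Prop :=
  ∀ S ∈ symGenFamily G, ∀ x y : G, wdist S (χ x) (χ y) = wdist S x y

lemma isSharedIsometry_mul_left (c : G) : IsSharedIsometry (c * ·) :=
  fun S _ => wdist_mul_left S c

namespace IsSharedIsometry

variable {χ ψ : G → G}

lemma comp (hχ : IsSharedIsometry χ) (hψ : IsSharedIsometry ψ) : IsSharedIsometry (χ ∘ ψ) :=
  fun S hS x y => (hχ S hS _ _).trans (hψ S hS x y)

lemma apply_mem_iff (hχ : IsSharedIsometry χ) (hχ1 : χ 1 = 1) {S : Set G}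
    (hS : S ∈ symGenFamily G) (h1 : (1 : G) ∉ S) (u : G) : χ u ∈ S ↔ u ∈ S := by
  have h := hχ S hS 1 u
  rw [hχ1] at h
  rw [← wdist_one_eq_one_iff hS.2.1 h1, ← wdist_one_eq_one_iff hS.2.1 h1, h]

end IsSharedIsometry

lemma insert_insert_inv_mem_symGenFamily {S : Set G} (hS : S ∈ symGenFamily G) (x : G) :
    insert x (insert x⁻¹ S) ∈ symGenFamily G := by
  obtain ⟨hfin, hsym, hgen⟩ := hS
  refine ⟨(hfin.insert _).insert _, ?_, ?_⟩
  · rw [Set.inv_insert, Set.inv_insert, hsym, inv_inv, Set.insert_comm]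
  · refine top_le_iff.1 (hgen ▸ Subgroup.closure_mono ?_)
    exact (Set.subset_insert _ _).trans (Set.subset_insert _ _)

lemma insert_insert_inv_sdiff_mem_symGenFamily {S : Set G} (hS : S ∈ symGenFamily G) {x t : G}
    (ht : t ∈ S) (htx : t ≠ x) (htx' : t ≠ x⁻¹) :
    insert (x * t) (insert (x * t)⁻¹ (S \ {x, x⁻¹})) ∈ symGenFamily G := by
  obtain ⟨hfin, hsym, hgen⟩ := hS
  refine ⟨(hfin.sdiff.insert _).insert _, ?_, ?_⟩
  · rw [Set.inv_insert, Set.inv_insert, inv_inv, Set.insert_comm]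
    congr
    ext u
    have := Set.ext_iff.1 hsym u
    simp only [Set.mem_inv] at this
    simp [this, inv_eq_iff_eq_inv, or_comm]
  · set B := insert (x * t) (insert (x * t)⁻¹ (S \ {x, x⁻¹}))
    have ht : t ∈ Subgroup.closure B :=
      Subgroup.subset_closure (.inr (.inr ⟨ht, by simp [htx, htx']⟩))
    have hx : x ∈ Subgroup.closure B := by
      simpa only [mul_inv_cancel_right] using
        mul_mem (Subgroup.subset_closure (Set.mem_insert _ _)) (inv_mem ht)
    rw [eq_top_iff, ← hgen, Subgroup.closure_le]
    intro u hu
    by_cases hux : u ∈ ({x, x⁻¹} : Set G)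
    · rcases hux with rfl | rfl
      exacts [hx, inv_mem hx]
    · exact Subgroup.subset_closure (.inr (.inr ⟨hu, hux⟩))

namespace IsSharedIsometry

variable {χ : G → G}

lemma apply_mem_sdiff (hχ : IsSharedIsometry χ) (hχ1 : χ 1 = 1) {A B : Set G}
    (hA : A ∈ symGenFamily G) (hB : B ∈ symGenFamily G) (hA1 : (1 : G) ∉ A) (hB1 : (1 : G) ∉ B)
    {x : G} (hx : x ∈ A \ B) : χ x ∈ A \ B := by
  rwa [Set.mem_sdiff, hχ.apply_mem_iff hχ1 hA hA1, hχ.apply_mem_iff hχ1 hB hB1]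

lemma apply_eq_or_eq_inv (hχ : IsSharedIsometry χ) (hχ1 : χ 1 = 1) {S : Set G}
    (hS : S ∈ symGenFamily G) (htri : ∀ s₁ ∈ S, ∀ s₂ ∈ S, ∀ s₃ ∈ S, s₁ * s₂ ≠ s₃)
    (hpair : ∀ x ∈ S, ∃ t ∈ S, t ≠ x ∧ t ≠ x⁻¹) (x : G) : χ x = x ∨ χ x = x⁻¹ := by
  have hS1 : (1 : G) ∉ S := fun h => htri 1 h 1 h 1 h (mul_one 1)
  have hSinv {u : G} (hu : u ∈ S) : u⁻¹ ∈ S := hS.2.1 ▸ Set.inv_mem_inv.2 hu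
  by_cases hx1 : x = 1
  · exact .inl (hx1 ▸ hχ1)
  by_cases hx : x ∈ S
  · obtain ⟨t, ht, htx, htx'⟩ := hpair x hx
    have hB1 : (1 : G) ∉ insert (x * t) (insert (x * t)⁻¹ (S \ {x, x⁻¹})) := by
      have hxt : x * t ≠ 1 := fun h => htx' (eq_inv_of_mul_eq_one_right h)
      simp only [Set.mem_insert_iff, Set.mem_sdiff, eq_comm (a := (1 : G)), inv_eq_one, hxt, hS1]
      tauto
    have hxB : x ∉ insert (x * t) (insert (x * t)⁻¹ (S \ {x, x⁻¹})) := by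
      simp only [Set.mem_insert_iff, Set.mem_sdiff, Set.mem_singleton_iff, true_or, not_true,
        and_false, or_false, not_or]
      exact ⟨fun h => hS1 (left_eq_mul.1 h ▸ ht), fun h => htri x hx x hx t⁻¹ (hSinv ht)
        (mul_eq_one_iff_eq_inv.1 ((mul_assoc x x t).trans (eq_inv_iff_mul_eq_one.1 h)))⟩
    have h := hχ.apply_mem_sdiff hχ1 hS (insert_insert_inv_sdiff_mem_symGenFamily hS ht htx htx')
      hS1 hB1 ⟨hx, hxB⟩
    simp only [Set.mem_sdiff, Set.mem_insert_iff, Set.mem_singleton_iff] at h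
    tauto
  · have hA1 : (1 : G) ∉ insert x (insert x⁻¹ S) := by simp [hS1, hx1, Ne.symm hx1]
    have h := hχ.apply_mem_sdiff hχ1 (insert_insert_inv_mem_symGenFamily hS x) hS hA1 hS1
      ⟨.inl rfl, hx⟩
    simp only [Set.mem_sdiff, Set.mem_insert_iff] at h
    tauto

end IsSharedIsometry

def PreservesIncrementsUpToInv (χ : G → G) : Prop :=
  ∀ a x : G, χ (a * x) = χ a * x ∨ χ (a * x) = χ a * x⁻¹

namespace PreservesIncrementsUpToInv

variable {χ : G → G}

lemma apply_eq_or_eq_inv (hχ : PreservesIncrementsUpToInv χ) (hχ1 : χ 1 = 1) (x : G) :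
    χ x = x ∨ χ x = x⁻¹ := by
  simpa [hχ1] using hχ 1 x

lemma apply_eq_self (hχ : PreservesIncrementsUpToInv χ) (hχ1 : χ 1 = 1) {a b : G}
    (hab : a * b ≠ b * a) (hsq : a ^ 2 ≠ b ^ 2) (hconj : a * b * a⁻¹ ≠ b⁻¹) : χ a = a := by
  rcases hχ.apply_eq_or_eq_inv hχ1 a with ha | ha
  · exact ha
  rcases hχ.apply_eq_or_eq_inv hχ1 (a * b⁻¹) with h | h <;>
    rcases hχ a b⁻¹ with h' | h' <;> rw [h, ha] at h'
  · rw [ha]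
    exact (mul_right_cancel h').symm
  · refine absurd ?_ hsq
    calc a ^ 2 = a * (a * b⁻¹) * b := by rw [sq]; group
      _ = b ^ 2 := by rw [h', sq]; group
  · refine absurd ?_ hconj
    calc a * b * a⁻¹ = a * (a * b⁻¹)⁻¹ := by group
      _ = b⁻¹ := by rw [h']; group
  · refine absurd ?_ hab
    calc a * b = a * (a * b⁻¹)⁻¹ * a := by group
      _ = b * a := by rw [h']; group

lemma apply_mul_eq_mul (hχ : PreservesIncrementsUpToInv χ) (hχ1 : χ 1 = 1) {a b : G}
    (ha : χ a = a) (hconj : b * a * b⁻¹ ≠ a⁻¹) : χ (a * b) = a * b := by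
  rcases hχ.apply_eq_or_eq_inv hχ1 (a * b) with h | h
  · exact h
  rcases hχ a b with h' | h' <;> rw [ha] at h'
  · exact h'
  refine absurd ?_ hconj
  calc b * a * b⁻¹ = b * (a * b⁻¹) := by group
    _ = a⁻¹ := by rw [← h', h]; group

lemma conj_eq_inv_of_apply_eq_self (hχ : PreservesIncrementsUpToInv χ) {x y : G}
    (hx : χ x = x⁻¹) (hxx : x⁻¹ ≠ x) (hy : χ y = y) : x * y * x⁻¹ = y⁻¹ := by
  have h := hχ y (y⁻¹ * x)
  rw [mul_inv_cancel_left, hy, mul_inv_cancel_left, hx] at h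
  rcases h with h | h
  · exact absurd h hxx
  calc x * y * x⁻¹ = x * (y * (y⁻¹ * x)⁻¹) * y⁻¹ := by group
    _ = y⁻¹ := by rw [← h]; group

lemma eq_id (hχ : PreservesIncrementsUpToInv χ) (hχ1 : χ 1 = 1) {a b : G}
    (hab : a * b ≠ b * a) (hsq : a ^ 2 ≠ b ^ 2) (hconj : a * b * a⁻¹ ≠ b⁻¹)
    (hconj' : b * a * b⁻¹ ≠ a⁻¹) (x : G) : χ x = x := by
  have ha := hχ.apply_eq_self hχ1 hab hsq hconj
  have hb := hχ.apply_eq_self hχ1 (Ne.symm hab) (Ne.symm hsq) hconj'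
  have hab' := hχ.apply_mul_eq_mul hχ1 ha hconj'
  rcases hχ.apply_eq_or_eq_inv hχ1 x with hx | hx
  · exact hx
  by_cases hxx : x⁻¹ = x
  · rwa [hxx] at hx
  -- conjugation by `x` is an automorphism inverting `a`, `b` and `a * b`
  refine absurd ?_ hab
  have h := hχ.conj_eq_inv_of_apply_eq_self hx hxx hab'
  rw [← MulAut.conj_apply, map_mul, MulAut.conj_apply, MulAut.conj_apply,
    hχ.conj_eq_inv_of_apply_eq_self hx hxx ha, hχ.conj_eq_inv_of_apply_eq_self hx hxx hb,
    mul_inv_rev] at h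
  simpa using congrArg (·⁻¹) h.symm

end PreservesIncrementsUpToInv

namespace IsSharedIsometry

variable {χ : G → G}

lemma preservesIncrementsUpToInv (hχ : IsSharedIsometry χ) {S : Set G}
    (hS : S ∈ symGenFamily G) (htri : ∀ s₁ ∈ S, ∀ s₂ ∈ S, ∀ s₃ ∈ S, s₁ * s₂ ≠ s₃)
    (hpair : ∀ x ∈ S, ∃ t ∈ S, t ≠ x ∧ t ≠ x⁻¹) : PreservesIncrementsUpToInv χ := by
  intro a x
  have hψ : IsSharedIsometry fun w => (χ a)⁻¹ * χ (a * w) :=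
    (isSharedIsometry_mul_left _).comp (hχ.comp (isSharedIsometry_mul_left a))
  simpa [inv_mul_eq_iff_eq_mul] using hψ.apply_eq_or_eq_inv (by simp) hS htri hpair x

end IsSharedIsometry

lemma nonempty_mulEquiv_sharedIsomGroup
    (h : ∀ φ : G → G, IsSharedIsometry φ → ∀ x, φ x = φ 1 * x) :
    Nonempty (G ≃* sharedIsomGroup (symGenFamily G) wdist) := by
  let F := (MulAction.toPermHom G G).codRestrict (sharedIsomGroup (symGenFamily G) wdist)
    isSharedIsometry_mul_left
  refine ⟨.ofBijective F ⟨?_, ?_⟩⟩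
  · exact (MonoidHom.injective_codRestrict _ _ _).2 MulAction.toPerm_injective
  · rintro ⟨φ, hφ⟩
    exact ⟨φ 1, Subtype.ext (Equiv.ext fun x => (h φ hφ x).symm)⟩

lemma exists_ne_and_ne_inv {S : Set G} {s₁ s₂ : G} (hs₁ : s₁ ∈ S) (hs₂ : s₂ ∈ S)
    (h : s₁ ≠ s₂) (h' : s₁ ≠ s₂⁻¹) (x : G) : ∃ t ∈ S, t ≠ x ∧ t ≠ x⁻¹ := by
  by_cases hx : s₁ = x ∨ s₁ = x⁻¹
  · refine ⟨s₂, hs₂, ?_⟩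
    rcases hx with rfl | rfl
    · exact ⟨h.symm, fun e => h' (by rw [e, inv_inv])⟩
    · exact ⟨fun e => h' (by rw [e]), h.symm⟩
  · exact ⟨s₁, hs₁, not_or.1 hx⟩

end

theorem shared_isometries_symmetric_general {G : Type*} [Group G]
    (S₀ : Set G) (hfin : S₀.Finite) (hsym : S₀⁻¹ = S₀)
    (hgen : Subgroup.closure S₀ = ⊤)
    (h1 : ∀ s₁ ∈ S₀, ∀ s₂ ∈ S₀, ∀ s₃ ∈ S₀, s₁ * s₂ ≠ s₃)
    (h2 : ∀ s₁ ∈ S₀, ∀ s₂ ∈ S₀, s₁ ≠ s₂ → s₁ ≠ s₂⁻¹ → s₁ ^ 2 * s₂ ^ 2 ≠ 1)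
    (h3 : ∀ s₁ ∈ S₀, ∀ s₂ ∈ S₀, s₁ ≠ s₂ → s₁ ≠ s₂⁻¹ → s₂⁻¹ * s₁ * s₂ ≠ s₁⁻¹)
    (h4 : ∀ s₁ ∈ S₀, ∀ s₂ ∈ S₀, s₁ ≠ s₂ → s₁ ≠ s₂⁻¹ → s₂⁻¹ * s₁ * s₂ ≠ s₁)
    (h5 : ∃ s₁ ∈ S₀, ∃ s₂ ∈ S₀, s₁ ≠ s₂ ∧ s₁ ≠ s₂⁻¹) :
    (∀ φ : G → G, Function.Bijective φ →
      (∀ S : Set G, S.Finite → S⁻¹ = S → Subgroup.closure S = ⊤ →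
        ∀ x y : G, wdist S (φ x) (φ y) = wdist S x y) →
      ∃ c : G, ∀ x : G, φ x = c * x) ∧
    Nonempty (G ≃* sharedIsomGroup (symGenFamily G) wdist) := by
  obtain ⟨a, ha, b, hb, hab, hab'⟩ := h5
  have hS₀ : S₀ ∈ symGenFamily G := ⟨hfin, hsym, hgen⟩
  have hinv {s : G} (hs : s ∈ S₀) : s⁻¹ ∈ S₀ := hsym ▸ Set.inv_mem_inv.2 hs
  have hba' : b ≠ a⁻¹ := fun e => hab' (by rw [e, inv_inv])
  have hcomm : a * b ≠ b * a := fun e =>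
    h4 a ha b hb hab hab' (by rw [mul_assoc, e, inv_mul_cancel_left])
  have hsq : a ^ 2 ≠ b ^ 2 := fun e =>
    h2 a ha b⁻¹ (hinv hb) hab' (by rwa [inv_inv]) (by rw [inv_pow, e, mul_inv_cancel])
  have hconj : a * b * a⁻¹ ≠ b⁻¹ := by
    simpa using h3 b hb a⁻¹ (hinv ha) hba' (by rwa [inv_inv, ne_comm])
  have hconj' : b * a * b⁻¹ ≠ a⁻¹ := by
    simpa using h3 a ha b⁻¹ (hinv hb) hab' (by rwa [inv_inv])
  have htranslate (φ : G → G) (hφ : IsSharedIsometry φ) (x : G) : φ x = φ 1 * x := by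
    have hψ : IsSharedIsometry fun w => (φ 1)⁻¹ * φ w := (isSharedIsometry_mul_left _).comp hφ
    have hψx := (hψ.preservesIncrementsUpToInv hS₀ h1 fun x _ =>
      exists_ne_and_ne_inv ha hb hab hab' x).eq_id (inv_mul_cancel _) hcomm hsq hconj hconj' x
    rwa [inv_mul_eq_iff_eq_mul] at hψx
  exact ⟨fun φ _ hφ => ⟨φ 1, htranslate φ fun S hS => hφ S hS.1 hS.2.1 hS.2.2⟩,
    nonempty_mulEquiv_sharedIsomGroup htranslate⟩

/-- If `G` admits a finite symmetric generating system `S₀` with no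
triangles (`s₁s₂ ≠ s₃`), no relations `s₁²s₂² = e`, `s₁^{s₂} = s₁⁻¹` or `s₁^{s₂} = s₁`
among non-mutually-inverse elements, and at least two distinct non-inverse elements, then
every shared isometry for the family of all finite symmetric generating systems is a left
translation, and the group of shared isometries is isomorphic to `G`. -/
theorem shared_isometries_symmetric {G : Type*} [Group G] [Group.FG G]
    (S₀ : Set G) (hfin : S₀.Finite) (hsym : S₀⁻¹ = S₀)
    (hgen : Subgroup.closure S₀ = ⊤)
    (h1 : ∀ s₁ ∈ S₀, ∀ s₂ ∈ S₀, ∀ s₃ ∈ S₀, s₁ * s₂ ≠ s₃)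
    (h2 : ∀ s₁ ∈ S₀, ∀ s₂ ∈ S₀, s₁ ≠ s₂ → s₁ ≠ s₂⁻¹ → s₁ ^ 2 * s₂ ^ 2 ≠ 1)
    (h3 : ∀ s₁ ∈ S₀, ∀ s₂ ∈ S₀, s₁ ≠ s₂ → s₁ ≠ s₂⁻¹ → s₂⁻¹ * s₁ * s₂ ≠ s₁⁻¹)
    (h4 : ∀ s₁ ∈ S₀, ∀ s₂ ∈ S₀, s₁ ≠ s₂ → s₁ ≠ s₂⁻¹ → s₂⁻¹ * s₁ * s₂ ≠ s₁)
    (h5 : ∃ s₁ ∈ S₀, ∃ s₂ ∈ S₀, s₁ ≠ s₂ ∧ s₁ ≠ s₂⁻¹) :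
    (∀ φ : G → G, Function.Bijective φ →
      (∀ S : Set G, S.Finite → S⁻¹ = S → Subgroup.closure S = ⊤ →
        ∀ x y : G, wdist S (φ x) (φ y) = wdist S x y) →
      ∃ c : G, ∀ x : G, φ x = c * x) ∧
    Nonempty (G ≃* sharedIsomGroup (symGenFamily G) wdist) :=
  shared_isometries_symmetric_general S₀ hfin hsym hgen h1 h2 h3 h4 h5
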